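/- arXiv:2511.09172 — 5 statements merged into one kernel-verified Lean document; each statement's English description precedes it below -/
import Mathlib

section
/- For every k ∈ ℝ, the linear system M(k)·Φ = F, where M(k) is the 3×3 complex matrix with rows (1, −cos k, 0), (0, cos k, −cos k), (i, sin k, sin k) and F = (−1, 0, i)ᵀ, admits a solution Φ = (R, a, b) ∈ ℂ³; moreover every solution has the same first component, namely R = (cos k + 2i sin k)/(cos k − 2i sin k) (note cos k − 2i sin k ≠ 0 for real k), and this R satisfies |R| = 1. -/
open Real

/-- The matrix of the scattering problem on the 1D graph waveguide. -/
noncomputable def M (k : ℝ) : Matrix (Fin 3) (Fin 3) ℂ :=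
  !![1, -(Real.cos k : ℂ), 0;
     0, (Real.cos k : ℂ), -(Real.cos k : ℂ);
     Complex.I, (Real.sin k : ℂ), (Real.sin k : ℂ)]

/-- For every k ∈ ℝ, the system M(k)Φ = (−1, 0, i)ᵀ admits a solution; every
solution has the same first component R = (cos k + 2i sin k)/(cos k − 2i sin k)
(the denominator being nonzero), and |R| = 1. -/
theorem reflection_coefficient_1d (k : ℝ) :
    ((Real.cos k : ℂ) - 2 * Complex.I * (Real.sin k : ℂ)) ≠ 0 ∧
    (∃ Φ : Fin 3 → ℂ, (M k).mulVec Φ = ![-1, 0, Complex.I]) ∧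
    (∀ Φ : Fin 3 → ℂ, (M k).mulVec Φ = ![-1, 0, Complex.I] →
      Φ 0 = ((Real.cos k : ℂ) + 2 * Complex.I * (Real.sin k : ℂ)) /
            ((Real.cos k : ℂ) - 2 * Complex.I * (Real.sin k : ℂ))) ∧
    ‖((Real.cos k : ℂ) + 2 * Complex.I * (Real.sin k : ℂ)) /
            ((Real.cos k : ℂ) - 2 * Complex.I * (Real.sin k : ℂ))‖ = 1 := by
  set c : ℂ := (Real.cos k : ℂ) with hc
  set s : ℂ := (Real.sin k : ℂ) with hs
  have hz : c - 2 * Complex.I * s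
      = ((Real.cos k : ℝ) : ℂ) + ((-(2 * Real.sin k) : ℝ) : ℂ) * Complex.I := by
    push_cast [hc, hs]; ring
  have hdne : c - 2 * Complex.I * s ≠ 0 := by
    intro h
    have h2 := congrArg Complex.normSq h
    rw [hz, Complex.normSq_add_mul_I] at h2
    simp at h2
    nlinarith [sin_sq_add_cos_sq k, h2]
  refine ⟨hdne, ?_, ?_, ?_⟩
  · refine ⟨![(c + 2*Complex.I*s)/(c - 2*Complex.I*s),
      2/(c - 2*Complex.I*s), 2/(c - 2*Complex.I*s)], ?_⟩
    funext i
    have hI := Complex.I_sq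
    fin_cases i
    · simp [M, Matrix.mulVec, dotProduct, Fin.sum_univ_three, ← hc, ← hs,
        -Complex.ofReal_cos, -Complex.ofReal_sin]
      field_simp
      ring
    · simp [M, Matrix.mulVec, dotProduct, Fin.sum_univ_three, ← hc, ← hs,
        -Complex.ofReal_cos, -Complex.ofReal_sin]
      try field_simp
      try ring
    · simp [M, Matrix.mulVec, dotProduct, Fin.sum_univ_three, ← hc, ← hs,
        -Complex.ofReal_cos, -Complex.ofReal_sin]
      have hd' : c - Complex.I * 2 * s ≠ 0 := by
        intro h; apply hdne; linear_combination h
      field_simp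
      try ring
      try linear_combination (norm := ring_nf) (4 : ℂ) * s * hI
  · intro Φ hΦ
    have h0 := congrFun hΦ 0
    have h1 := congrFun hΦ 1
    have h2 := congrFun hΦ 2
    simp [M, Matrix.mulVec, dotProduct, Fin.sum_univ_three, ← hc, ← hs,
      -Complex.ofReal_cos, -Complex.ofReal_sin] at h0 h1 h2
    rw [eq_div_iff hdne]
    by_cases hc0 : c = 0
    · linear_combination (Φ 0 - 1 - 2*Complex.I*s*Φ 1) * hc0 + (-2*Complex.I*s) * h0
    · have h12 : Φ 1 = Φ 2 := by
        apply mul_left_cancel₀ hc0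
        linear_combination h1
      linear_combination (-Complex.I) * (c*h2 + 2*s*h0 + c*s*h12)
        + c*(Φ 0 - 1) * Complex.I_sq
  · have hconj : c - 2*Complex.I*s = (starRingEnd ℂ) (c + 2*Complex.I*s) := by
      simp [hc, hs, map_add, map_mul, Complex.conj_I, Complex.conj_ofReal,
        -Complex.ofReal_cos, -Complex.ofReal_sin, map_ofNat]
      ring
    have habs : ‖c + 2*Complex.I*s‖ ≠ 0 := by
      rw [ne_eq, norm_eq_zero]
      intro h
      exact hdne (by rw [hconj, h, map_zero])
    rw [norm_div, hconj, Complex.norm_conj, div_self habs]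
end

section
/- Define 𝓡 : ℝ² → ℂ by 𝓡(ε,k) = (cos k · cos(k(1+ε)) + i·sin(k(2+ε)))/(cos k · cos(k(1+ε)) − i·sin(k(2+ε))) wherever the denominator is nonzero. Fix k' ∈ ℝ with k' ≠ −π/4. Then, as ε → 0 with ε ≠ 0, 𝓡(ε, π/2 + ε k') = −1 + ε·(−2i k' (π + 2k'))/(π + 4k') + O(ε²); in particular the limit of 𝓡(ε, π/2 + ε k') as ε → 0, ε ≠ 0, equals −1. -/
set_option maxHeartbeats 1000000
open Real Filter Topology Asymptotics

lemma abs_le_one_nhds : ∀ᶠ y : ℝ in 𝓝 0, |y| ≤ 1 := by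
  filter_upwards [Metric.ball_mem_nhds (0:ℝ) one_pos] with y hy
  rw [Metric.mem_ball, Real.dist_eq, sub_zero] at hy
  exact hy.le

lemma sin_sub_self_isBigO : (fun y : ℝ => Real.sin y - y) =O[𝓝 (0:ℝ)] (fun y => y ^ 3) := by
  rw [Asymptotics.isBigO_iff]
  refine ⟨1, ?_⟩
  filter_upwards [abs_le_one_nhds] with y hy
  have hb := Real.sin_bound hy
  have h1 : |Real.sin y - y| ≤ |y| ^ 4 * (5 / 96) + |y| ^ 3 / 6 := by
    have ht := abs_sub_le (Real.sin y) (y - y ^ 3 / 6) y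
    have h2 : |y - y ^ 3 / 6 - y| = |y| ^ 3 / 6 := by
      rw [show y - y ^ 3 / 6 - y = -(y ^ 3 / 6) by ring, abs_neg, abs_div, abs_pow]
      norm_num
    rw [h2] at ht
    linarith [pow_le_pow_of_le_one (abs_nonneg y) hy (show 4 ≤ 5 by norm_num), pow_nonneg (abs_nonneg y) 4]
  have h4 : |y| ^ 4 ≤ |y| ^ 3 := pow_le_pow_of_le_one (abs_nonneg y) hy (by norm_num)
  have : ‖Real.sin y - y‖ ≤ |y| ^ 3 := by
    rw [Real.norm_eq_abs]
    linarith [pow_nonneg (abs_nonneg y) 3]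
  simpa [abs_pow] using this

lemma pow_isBigO_pow {m n : ℕ} (h : n ≤ m) :
    (fun ε : ℝ => ε ^ m) =O[𝓝 (0:ℝ)] fun ε => ε ^ n := by
  rw [Asymptotics.isBigO_iff]
  refine ⟨1, ?_⟩
  filter_upwards [abs_le_one_nhds] with y hy
  simp only [norm_pow, Real.norm_eq_abs, one_mul]
  exact pow_le_pow_of_le_one (abs_nonneg y) hy h

lemma comp3 (r s : ℝ) :
    (fun ε : ℝ => Real.sin (ε * r + ε ^ 2 * s) - (ε * r + ε ^ 2 * s)) =O[𝓝 (0:ℝ)]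
      fun ε => ε ^ 3 := by
  have h1 : Tendsto (fun ε : ℝ => ε * r + ε ^ 2 * s) (𝓝 0) (𝓝 0) := by
    have hc : Continuous fun ε : ℝ => ε * r + ε ^ 2 * s := by continuity
    simpa using hc.tendsto' 0 0 (by norm_num)
  have h2 := sin_sub_self_isBigO.comp_tendsto h1
  refine h2.trans ?_
  have h3 : (fun ε : ℝ => ε * r + ε ^ 2 * s) =O[𝓝 (0:ℝ)] fun ε => ε := by
    have hfe : (fun ε : ℝ => ε * r + ε ^ 2 * s) = fun ε => ε * (r + ε * s) := by
      funext ε; ring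
    rw [hfe]
    have hb : Tendsto (fun ε : ℝ => r + ε * s) (𝓝 0) (𝓝 r) := by
      have hc : Continuous fun ε : ℝ => r + ε * s := by continuity
      simpa using hc.tendsto' 0 r (by norm_num)
    simpa using (isBigO_refl (fun ε : ℝ => ε) (𝓝 (0:ℝ))).mul (hb.isBigO_one (F := ℝ))
  exact h3.pow 3

lemma ofReal_isBigO {f g : ℝ → ℝ} {l : Filter ℝ} (h : f =O[l] g) :
    (fun x => ((f x : ℂ))) =O[l] g := by
  have heq : (fun x => ‖((f x : ℂ))‖) = fun x => ‖f x‖ := by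
    funext x; simp [Complex.norm_real]
  exact Asymptotics.IsBigO.of_norm_left (heq ▸ h.norm_left)

noncomputable def scatR (ε k : ℝ) : ℂ :=
  ((Real.cos k : ℂ) * (Real.cos (k * (1 + ε)) : ℂ)
      + Complex.I * (Real.sin (k * (2 + ε)) : ℂ)) /
  ((Real.cos k : ℂ) * (Real.cos (k * (1 + ε)) : ℂ)
      - Complex.I * (Real.sin (k * (2 + ε)) : ℂ))

/-- Along the straight path k = π/2 + εk' with k' ≠ −π/4, as ε → 0 (ε ≠ 0),
𝓡(ε, π/2 + εk') = −1 + ε·(−2ik'(π + 2k'))/(π + 4k') + O(ε²); in particular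
its limit as ε → 0, ε ≠ 0, is −1. -/
theorem fano_linear_path (k' : ℝ) (hk' : k' ≠ -π / 4) :
    Asymptotics.IsBigO (𝓝[≠] (0:ℝ))
      (fun ε : ℝ => scatR ε (π / 2 + ε * k') -
        (-1 + (ε : ℂ) *
          ((-2 * Complex.I * (k' : ℂ) * ((π : ℂ) + 2 * (k' : ℂ))) /
            ((π : ℂ) + 4 * (k' : ℂ)))))
      (fun ε : ℝ => ε ^ 2) ∧
    Tendsto (fun ε : ℝ => scatR ε (π / 2 + ε * k')) (𝓝[≠] (0:ℝ)) (𝓝 (-1)) := by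
  have hbne' : 2 * k' + π / 2 ≠ 0 := fun h => hk' (by linarith)
  have hπ4' : π + 4 * k' ≠ 0 := fun h => hbne' (by linarith)
  have hπ4 : (π : ℂ) + 4 * (k' : ℂ) ≠ 0 := by
    have h := Complex.ofReal_ne_zero.2 hπ4'
    push_cast at h
    exact h
  set a : ℝ := k' + π / 2 with hadef
  set b : ℝ := 2 * k' + π / 2 with hbdef
  set c : ℂ := (-2 * Complex.I * (k' : ℂ) * ((π : ℂ) + 2 * (k' : ℂ))) /
      ((π : ℂ) + 4 * (k' : ℂ)) with hcdef
  have hbne : b ≠ 0 := hbdef ▸ hbne'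
  have hcb : c * (b : ℂ) = -(2 * Complex.I * (k' : ℂ) * (a : ℂ)) := by
    rw [hcdef, hadef, hbdef]
    push_cast
    rw [div_mul_eq_mul_div, div_eq_iff hπ4]
    ring
  clear_value a b c
  set P : ℝ → ℝ := fun ε => Real.sin (ε * k') * Real.sin (ε * a + ε ^ 2 * k') with hPdef
  set Q : ℝ → ℝ := fun ε => Real.sin (ε * b + ε ^ 2 * k') with hQdef
  have hQest : (fun ε : ℝ => Q ε - (ε * b + ε ^ 2 * k')) =O[𝓝 (0:ℝ)] fun ε => ε ^ 3 := by
    simpa [hQdef] using comp3 b k'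
  have hu : (fun ε : ℝ => Real.sin (ε * k') - ε * k') =O[𝓝 (0:ℝ)] fun ε => ε ^ 3 := by
    simpa using comp3 k' 0
  have hv : (fun ε : ℝ => Real.sin (ε * a + ε ^ 2 * k') - (ε * a + ε ^ 2 * k')) =O[𝓝 (0:ℝ)]
      fun ε => ε ^ 3 := comp3 a k'
  have hsinv1 : (fun ε : ℝ => Real.sin (ε * a + ε ^ 2 * k')) =O[𝓝 (0:ℝ)]
      (fun _ => (1:ℝ)) := by
    apply Asymptotics.isBigO_of_le
    intro x
    simp only [Real.norm_eq_abs, norm_one]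
    exact Real.abs_sin_le_one _
  have hPest : (fun ε : ℝ => P ε - ε ^ 2 * (k' * a)) =O[𝓝 (0:ℝ)] fun ε => ε ^ 3 := by
    have hid : (fun ε : ℝ => P ε - ε ^ 2 * (k' * a)) = fun ε =>
        (Real.sin (ε * k') - ε * k') * Real.sin (ε * a + ε ^ 2 * k')
        + (ε * k') * (Real.sin (ε * a + ε ^ 2 * k') - (ε * a + ε ^ 2 * k'))
        + k' ^ 2 * ε ^ 3 := by
      funext ε; rw [hPdef]; ring
    rw [hid]
    have t1 : (fun ε : ℝ => (Real.sin (ε * k') - ε * k') * Real.sin (ε * a + ε ^ 2 * k'))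
        =O[𝓝 (0:ℝ)] fun ε => ε ^ 3 := by
      simpa using hu.mul hsinv1
    have t2 : (fun ε : ℝ => (ε * k') * (Real.sin (ε * a + ε ^ 2 * k') - (ε * a + ε ^ 2 * k')))
        =O[𝓝 (0:ℝ)] fun ε => ε ^ 3 := by
      have h1 : (fun ε : ℝ => ε * k') =O[𝓝 (0:ℝ)] fun ε => ε := by
        simpa [mul_comm] using Asymptotics.isBigO_const_mul_self k' (fun ε : ℝ => ε) (𝓝 (0:ℝ))
      have h2 := h1.mul hv
      refine h2.trans ?_
      have he : (fun ε : ℝ => ε * ε ^ 3) = fun ε => ε ^ 4 := by funext ε; ring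
      rw [he]
      exact pow_isBigO_pow (by norm_num)
    have t3 : (fun ε : ℝ => k' ^ 2 * ε ^ 3) =O[𝓝 (0:ℝ)] fun ε => ε ^ 3 :=
      Asymptotics.isBigO_const_mul_self _ _ _
    exact (t1.add t2).add t3
  clear_value P Q
  set D : ℝ → ℂ := fun ε => (P ε : ℂ) + Complex.I * (Q ε : ℂ) with hDdef
  clear_value D
  have hscat : ∀ ε : ℝ, scatR ε (π / 2 + ε * k') =
      ((P ε : ℂ) - Complex.I * (Q ε : ℂ)) / D ε := by
    intro ε
    have c1 : Real.cos (π / 2 + ε * k') = -Real.sin (ε * k') := by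
      simp [Real.cos_add]
    have harg1 : (π / 2 + ε * k') * (1 + ε) = π / 2 + (ε * a + ε ^ 2 * k') := by
      rw [hadef]; ring
    have c2 : Real.cos ((π / 2 + ε * k') * (1 + ε)) = -Real.sin (ε * a + ε ^ 2 * k') := by
      rw [harg1]; simp [Real.cos_add]
    have harg2 : (π / 2 + ε * k') * (2 + ε) = π + (ε * b + ε ^ 2 * k') := by
      rw [hbdef]; ring
    have c3 : Real.sin ((π / 2 + ε * k') * (2 + ε)) = -Real.sin (ε * b + ε ^ 2 * k') := by
      rw [harg2]; simp [Real.sin_add]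
    rw [scatR, c1, c2, c3, hDdef, hPdef, hQdef]
    push_cast
    congr 1 <;> ring
  set α : ℝ → ℂ := fun ε => (P ε : ℂ) - (ε : ℂ) ^ 2 * ((k' : ℂ) * (a : ℂ)) with hαdef
  set β : ℝ → ℂ := fun ε => (Q ε : ℂ) - ((ε : ℂ) * (b : ℂ) + (ε : ℂ) ^ 2 * (k' : ℂ)) with hβdef
  have hα : α =O[𝓝 (0:ℝ)] fun ε => ε ^ 3 := by
    have hid : α = fun ε : ℝ => ((P ε - ε ^ 2 * (k' * a) : ℝ) : ℂ) := by
      funext ε; rw [hαdef]; push_cast; ring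
    rw [hid]
    exact ofReal_isBigO hPest
  have hβ : β =O[𝓝 (0:ℝ)] fun ε => ε ^ 3 := by
    have hid : β = fun ε : ℝ => ((Q ε - (ε * b + ε ^ 2 * k') : ℝ) : ℂ) := by
      funext ε; rw [hβdef]; push_cast; ring
    rw [hid]
    exact ofReal_isBigO hQest
  clear_value α β
  set N : ℝ → ℂ := fun ε => 2 * (P ε : ℂ) - (ε : ℂ) * c * D ε with hNdef
  clear_value N
  have hN : N =O[𝓝 (0:ℝ)] fun ε => ε ^ 3 := by
    have hfe : N = fun ε : ℝ => ((2 : ℂ) - (ε : ℂ) * c) * α ε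
        - Complex.I * (ε : ℂ) * c * β ε
        - (ε : ℂ) ^ 3 * (c * (k' : ℂ) * ((a : ℂ) + Complex.I)) := by
      funext ε
      rw [hNdef, hαdef, hβdef, hDdef]
      linear_combination (-(Complex.I) * (ε : ℂ) ^ 2) * hcb + (2 * (ε : ℂ) ^ 2 * (k' : ℂ) * (a : ℂ)) * Complex.I_sq
    rw [hfe]
    have hb1 : Tendsto (fun ε : ℝ => (2 : ℂ) - (ε : ℂ) * c) (𝓝 0) (𝓝 2) := by
      have hc1 : Continuous fun ε : ℝ => (2 : ℂ) - (ε : ℂ) * c := by continuity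
      simpa using hc1.tendsto' 0 2 (by norm_num)
    have hb2 : Tendsto (fun ε : ℝ => Complex.I * (ε : ℂ) * c) (𝓝 0) (𝓝 0) := by
      have hc1 : Continuous fun ε : ℝ => Complex.I * (ε : ℂ) * c := by continuity
      simpa using hc1.tendsto' 0 0 (by norm_num)
    have t1 : (fun ε : ℝ => ((2 : ℂ) - (ε : ℂ) * c) * α ε) =O[𝓝 (0:ℝ)] fun ε => ε ^ 3 := by
      simpa using (hb1.isBigO_one (F := ℝ)).mul hα
    have t2 : (fun ε : ℝ => Complex.I * (ε : ℂ) * c * β ε) =O[𝓝 (0:ℝ)] fun ε => ε ^ 3 := by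
      simpa using (hb2.isBigO_one (F := ℝ)).mul hβ
    have t3 : (fun ε : ℝ => (ε : ℂ) ^ 3 * (c * (k' : ℂ) * ((a : ℂ) + Complex.I)))
        =O[𝓝 (0:ℝ)] fun ε => ε ^ 3 := by
      rw [Asymptotics.isBigO_iff]
      refine ⟨‖c * (k' : ℂ) * ((a : ℂ) + Complex.I)‖, Eventually.of_forall fun ε => ?_⟩
      rw [norm_mul, norm_pow, Complex.norm_real, Real.norm_eq_abs, Real.norm_eq_abs, abs_pow]
      exact le_of_eq (mul_comm _ _)
    exact (t1.sub t2).sub t3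
  have hDb : (fun ε : ℝ => D ε - Complex.I * (ε : ℂ) * (b : ℂ)) =O[𝓝 (0:ℝ)]
      fun ε => ε ^ 2 := by
    have hfe : (fun ε : ℝ => D ε - Complex.I * (ε : ℂ) * (b : ℂ)) = fun ε : ℝ =>
        α ε + Complex.I * β ε + (ε : ℂ) ^ 2 * ((k' : ℂ) * (a : ℂ) + Complex.I * (k' : ℂ)) := by
      funext ε
      rw [hDdef, hαdef, hβdef]
      ring
    rw [hfe]
    have h32 : (fun ε : ℝ => ε ^ 3) =O[𝓝 (0:ℝ)] fun ε => ε ^ 2 := pow_isBigO_pow (by norm_num)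
    have t1 : α =O[𝓝 (0:ℝ)] fun ε => ε ^ 2 := hα.trans h32
    have t2 : (fun ε : ℝ => Complex.I * β ε) =O[𝓝 (0:ℝ)] fun ε => ε ^ 2 :=
      (Asymptotics.isBigO_const_mul_self Complex.I β (𝓝 (0:ℝ))).trans (hβ.trans h32)
    have t3 : (fun ε : ℝ => (ε : ℂ) ^ 2 * ((k' : ℂ) * (a : ℂ) + Complex.I * (k' : ℂ)))
        =O[𝓝 (0:ℝ)] fun ε => ε ^ 2 := by
      rw [Asymptotics.isBigO_iff]
      refine ⟨‖(k' : ℂ) * (a : ℂ) + Complex.I * (k' : ℂ)‖, Eventually.of_forall fun ε => ?_⟩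
      rw [norm_mul, norm_pow, Complex.norm_real, Real.norm_eq_abs, Real.norm_eq_abs, abs_pow]
      exact le_of_eq (mul_comm _ _)
    exact (t1.add t2).add t3
  -- passing to the punctured neighbourhood
  have hmono : 𝓝[≠] (0:ℝ) ≤ 𝓝 (0:ℝ) := nhdsWithin_le_nhds
  have hεne : ∀ᶠ ε : ℝ in 𝓝[≠] (0:ℝ), ε ≠ 0 := by
    filter_upwards [eventually_mem_nhdsWithin] with ε hε
    exact hε
  have hDdiv : Tendsto (fun ε : ℝ => D ε / (ε : ℂ)) (𝓝[≠] (0:ℝ))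
      (𝓝 (Complex.I * (b : ℂ))) := by
    have h2 : (fun ε : ℝ => ((ε : ℂ))⁻¹) =O[𝓝[≠] (0:ℝ)] fun ε : ℝ => ε⁻¹ := by
      apply Asymptotics.isBigO_of_le
      intro x
      simp
    have h3 := (hDb.mono hmono).mul h2
    have h1 : (fun ε : ℝ => D ε / (ε : ℂ) - Complex.I * (b : ℂ)) =O[𝓝[≠] (0:ℝ)]
        fun ε : ℝ => ε := by
      refine h3.congr' ?_ ?_
      · filter_upwards [hεne] with ε hε
        have hεC : (ε : ℂ) ≠ 0 := Complex.ofReal_ne_zero.2 hε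
        field_simp
      · filter_upwards [hεne] with ε hε
        field_simp
    have h4 : Tendsto (fun ε : ℝ => D ε / (ε : ℂ) - Complex.I * (b : ℂ)) (𝓝[≠] (0:ℝ))
        (𝓝 0) := by
      refine h1.trans_tendsto ?_
      exact (continuous_id.tendsto' 0 0 rfl).mono_left hmono
    have h5 := h4.add_const (Complex.I * (b : ℂ))
    simpa using h5
  have hbpos : 0 < ‖Complex.I * (b : ℂ)‖ := by
    simp [Complex.norm_real, hbne]
  have hev : ∀ᶠ ε : ℝ in 𝓝[≠] (0:ℝ), ‖Complex.I * (b : ℂ)‖ / 2 < ‖D ε / (ε : ℂ)‖ :=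
    hDdiv.norm.eventually (eventually_gt_nhds (half_lt_self hbpos))
  have hDne : ∀ᶠ ε : ℝ in 𝓝[≠] (0:ℝ), D ε ≠ 0 := by
    filter_upwards [hev, hεne] with ε h1 h2
    intro h0
    rw [h0] at h1
    simp at h1
    linarith [abs_nonneg b]
  have hεD : (fun ε : ℝ => (ε : ℂ)) =O[𝓝[≠] (0:ℝ)] D := by
    rw [Asymptotics.isBigO_iff]
    refine ⟨2 / ‖Complex.I * (b : ℂ)‖, ?_⟩
    filter_upwards [hev, hεne] with ε h1 h2
    have hεC : (ε : ℂ) ≠ 0 := Complex.ofReal_ne_zero.2 h2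
    have hp : 0 < ‖(ε : ℂ)‖ := norm_pos_iff.2 hεC
    rw [norm_div] at h1
    have h3 := (lt_div_iff₀ hp).1 h1
    rw [div_mul_eq_mul_div, le_div_iff₀ hbpos]
    linarith [h3]
  have hinvD : (fun ε : ℝ => (D ε)⁻¹) =O[𝓝[≠] (0:ℝ)] fun ε : ℝ => ((ε : ℂ))⁻¹ := by
    refine hεD.inv_rev ?_
    filter_upwards [hεne] with ε hε h
    exact ((Complex.ofReal_ne_zero.2 hε) h).elim
  have hinvD' : (fun ε : ℝ => (D ε)⁻¹) =O[𝓝[≠] (0:ℝ)] fun ε : ℝ => ε⁻¹ := by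
    refine hinvD.trans (Asymptotics.isBigO_of_le _ fun x => ?_)
    simp
  have heq : ∀ᶠ ε : ℝ in 𝓝[≠] (0:ℝ),
      scatR ε (π / 2 + ε * k') - (-1 + (ε : ℂ) * c) = N ε * (D ε)⁻¹ := by
    filter_upwards [hDne] with ε h0
    rw [hDdef] at h0
    simp only at h0
    rw [hscat ε, hNdef, hDdef]
    simp only
    field_simp
    ring
  have key : (fun ε : ℝ => scatR ε (π / 2 + ε * k') - (-1 + (ε : ℂ) * c))
      =O[𝓝[≠] (0:ℝ)] fun ε : ℝ => ε ^ 2 := by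
    have h5 := (hN.mono hmono).mul hinvD'
    refine h5.congr' (heq.mono fun ε h => h.symm) ?_
    filter_upwards [hεne] with ε hε
    field_simp
  refine ⟨key, ?_⟩
  have hg2 : Tendsto (fun ε : ℝ => (ε : ℝ) ^ 2) (𝓝[≠] (0:ℝ)) (𝓝 0) := by
    have hc1 : Continuous fun ε : ℝ => ε ^ 2 := by continuity
    exact (hc1.tendsto' 0 0 (by norm_num)).mono_left hmono
  have h6 : Tendsto (fun ε : ℝ => scatR ε (π / 2 + ε * k') - (-1 + (ε : ℂ) * c))
      (𝓝[≠] (0:ℝ)) (𝓝 0) := key.trans_tendsto hg2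
  have h7 : Tendsto (fun ε : ℝ => (-1 + (ε : ℂ) * c)) (𝓝[≠] (0:ℝ)) (𝓝 (-1)) := by
    have hc1 : Continuous fun ε : ℝ => (-1 + (ε : ℂ) * c) := by continuity
    exact (hc1.tendsto' 0 (-1) (by norm_num)).mono_left hmono
  have h8 := h6.add h7
  simpa using h8
end

section
/- Define 𝓡 : ℝ² → ℂ by 𝓡(ε,k) = (cos k · cos(k(1+ε)) + i·sin(k(2+ε)))/(cos k · cos(k(1+ε)) − i·sin(k(2+ε))) wherever the denominator is nonzero, and for μ ∈ ℝ set g(μ) = (π² + i(32μ − 4π))/(π² − i(32μ − 4π)). Then for every μ ∈ ℝ, the limit of 𝓡(ε, π/2 − ε π/4 + ε² μ) as ε → 0, ε ≠ 0, equals g(μ). In particular, 𝓡 admits different limits at the point (0, π/2) along different parabolic paths, so 𝓡 has no continuous extension at (0, π/2). -/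
open Real Filter Topology Asymptotics

/-- The Möbius-type map giving the limit values along the parabolic paths. -/
noncomputable def fanoG (μ : ℝ) : ℂ :=
  ((π ^ 2 : ℂ) + Complex.I * (32 * (μ : ℂ) - 4 * (π : ℂ))) /
  ((π ^ 2 : ℂ) - Complex.I * (32 * (μ : ℂ) - 4 * (π : ℂ)))

/-- The parabolic path in wavenumber space. -/
noncomputable def kpath (μ ε : ℝ) : ℝ := π / 2 - ε * π / 4 + ε ^ 2 * μ

lemma tendsto_cos1 (μ : ℝ) : Tendsto (fun ε : ℝ =>
    Real.cos (π / 2 - ε * π / 4 + ε ^ 2 * μ) / ε) (𝓝[≠] 0) (𝓝 (π / 4)) := by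
  have hid : HasDerivAt (fun ε : ℝ => ε) 1 0 := hasDerivAt_id 0
  have hsq : HasDerivAt (fun ε : ℝ => ε ^ 2) 0 0 := by
    simpa using hasDerivAt_pow 2 (0 : ℝ)
  have hinner : HasDerivAt (fun ε : ℝ => π / 2 - ε * π / 4 + ε ^ 2 * μ) (-(π / 4)) 0 := by
    have h1 : HasDerivAt (fun ε : ℝ => ε * π / 4) (π / 4) 0 := by
      have := (hid.mul_const π).div_const 4
      simpa using this
    have := ((h1.const_sub (π / 2)).add (hsq.mul_const μ))
    exact this.congr_deriv (by ring)
  have hF : HasDerivAt (fun ε : ℝ => Real.cos (π / 2 - ε * π / 4 + ε ^ 2 * μ)) (π / 4) 0 := by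
    have := hinner.cos
    norm_num at this
    exact this
  have h := hasDerivAt_iff_tendsto_slope.mp hF
  refine h.congr (fun x => ?_)
  simp [slope_def_field]

lemma tendsto_cos2 (μ : ℝ) : Tendsto (fun ε : ℝ =>
    Real.cos ((π / 2 - ε * π / 4 + ε ^ 2 * μ) * (1 + ε)) / ε) (𝓝[≠] 0) (𝓝 (-(π / 4))) := by
  have hid : HasDerivAt (fun ε : ℝ => ε) 1 0 := hasDerivAt_id 0
  have hsq : HasDerivAt (fun ε : ℝ => ε ^ 2) 0 0 := by
    simpa using hasDerivAt_pow 2 (0 : ℝ)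
  have hinner : HasDerivAt (fun ε : ℝ => π / 2 - ε * π / 4 + ε ^ 2 * μ) (-(π / 4)) 0 := by
    have h1 : HasDerivAt (fun ε : ℝ => ε * π / 4) (π / 4) 0 := by
      have := (hid.mul_const π).div_const 4
      simpa using this
    have := ((h1.const_sub (π / 2)).add (hsq.mul_const μ))
    exact this.congr_deriv (by ring)
  have hone : HasDerivAt (fun ε : ℝ => 1 + ε) 1 0 := by
    simpa using (hid.const_add 1)
  have hin2 : HasDerivAt (fun ε : ℝ => (π / 2 - ε * π / 4 + ε ^ 2 * μ) * (1 + ε)) (π / 4) 0 := by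
    have := hinner.mul hone
    norm_num at this
    exact this.congr_deriv (by ring)
  have hF : HasDerivAt (fun ε : ℝ => Real.cos ((π / 2 - ε * π / 4 + ε ^ 2 * μ) * (1 + ε)))
      (-(π / 4)) 0 := by
    have := hin2.cos
    norm_num at this
    exact this
  have h := hasDerivAt_iff_tendsto_slope.mp hF
  refine h.congr (fun x => ?_)
  simp [slope_def_field]

lemma tendsto_A (μ : ℝ) : Tendsto (fun ε : ℝ =>
    Real.cos (π / 2 - ε * π / 4 + ε ^ 2 * μ)
      * Real.cos ((π / 2 - ε * π / 4 + ε ^ 2 * μ) * (1 + ε)) / ε ^ 2)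
    (𝓝[≠] 0) (𝓝 (-(π ^ 2 / 16))) := by
  have h := (tendsto_cos1 μ).mul (tendsto_cos2 μ)
  rw [show π / 4 * -(π / 4) = -(π ^ 2 / 16) by ring] at h
  refine h.congr fun ε => ?_
  rw [div_mul_div_comm]
  ring_nf

lemma tendsto_B (μ : ℝ) : Tendsto (fun ε : ℝ =>
    Real.sin ((π / 2 - ε * π / 4 + ε ^ 2 * μ) * (2 + ε)) / ε ^ 2)
    (𝓝[≠] 0) (𝓝 (π / 4 - 2 * μ)) := by
  set q : ℝ → ℝ := fun ε => 2 * μ - π / 4 + ε * μ with hq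
  have harg : ∀ ε : ℝ, (π / 2 - ε * π / 4 + ε ^ 2 * μ) * (2 + ε) = ε ^ 2 * q ε + π := by
    intro ε; simp only [hq]; ring
  have hsinval : ∀ ε : ℝ, Real.sin ((π / 2 - ε * π / 4 + ε ^ 2 * μ) * (2 + ε))
      = -Real.sin (ε ^ 2 * q ε) := by
    intro ε; rw [harg, Real.sin_add_pi]
  have hsin : (fun x : ℝ => Real.sin x - x) =o[𝓝 0] (fun x : ℝ => x) := by
    have h := hasDerivAt_iff_isLittleO.mp (Real.hasDerivAt_sin 0)
    simpa using h
  have hqcont : Tendsto q (𝓝[≠] 0) (𝓝 (2 * μ - π / 4)) := by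
    have : ContinuousAt q 0 := by fun_prop
    have := this.continuousWithinAt (s := {(0:ℝ)}ᶜ)
    simpa [hq, ContinuousWithinAt] using this
  have hu : Tendsto (fun ε : ℝ => ε ^ 2 * q ε) (𝓝[≠] 0) (𝓝 0) := by
    have hc : ContinuousAt (fun ε : ℝ => ε ^ 2 * q ε) 0 := by fun_prop
    have := hc.continuousWithinAt (s := {(0:ℝ)}ᶜ)
    simpa [hq, ContinuousWithinAt] using this
  have h1 : (fun ε : ℝ => Real.sin (ε ^ 2 * q ε) - ε ^ 2 * q ε) =o[𝓝[≠] 0]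
      (fun ε => ε ^ 2 * q ε) := hsin.comp_tendsto hu
  have h2 : (fun ε : ℝ => ε ^ 2 * q ε) =O[𝓝[≠] 0] (fun ε : ℝ => ε ^ 2) := by
    have hb : (fun ε : ℝ => q ε) =O[𝓝[≠] 0] (fun _ => (1 : ℝ)) := hqcont.isBigO_one ℝ
    have := (isBigO_refl (fun ε : ℝ => ε ^ 2) (𝓝[≠] 0)).mul hb
    simpa using this
  have h3 : (fun ε : ℝ => Real.sin (ε ^ 2 * q ε) - ε ^ 2 * q ε) =o[𝓝[≠] 0]
      (fun ε : ℝ => ε ^ 2) := h1.trans_isBigO h2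
  have h4 : Tendsto (fun ε : ℝ => (Real.sin (ε ^ 2 * q ε) - ε ^ 2 * q ε) / ε ^ 2)
      (𝓝[≠] 0) (𝓝 0) := h3.tendsto_div_nhds_zero
  have h5 : Tendsto (fun ε : ℝ => (Real.sin (ε ^ 2 * q ε) - ε ^ 2 * q ε) / ε ^ 2 + q ε)
      (𝓝[≠] 0) (𝓝 (0 + (2 * μ - π / 4))) := h4.add hqcont
  rw [show (0:ℝ) + (2 * μ - π / 4) = 2 * μ - π / 4 by ring] at h5
  have h6 : Tendsto (fun ε : ℝ => Real.sin (ε ^ 2 * q ε) / ε ^ 2)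
      (𝓝[≠] 0) (𝓝 (2 * μ - π / 4)) := by
    refine h5.congr' ?_
    filter_upwards [self_mem_nhdsWithin] with ε (hε : ε ≠ 0)
    have hε2 : (ε : ℝ) ^ 2 ≠ 0 := pow_ne_zero _ hε
    field_simp
    ring
  have h7 := h6.neg
  rw [show -(2 * μ - π / 4) = π / 4 - 2 * μ by ring] at h7
  refine h7.congr fun ε => ?_
  rw [hsinval ε]
  ring

/-- The scaled complex denominator tends to a nonzero limit. -/
lemma tendsto_den (μ : ℝ) : Tendsto (fun ε : ℝ =>
    (((Real.cos (kpath μ ε) : ℂ) * (Real.cos (kpath μ ε * (1 + ε)) : ℂ)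
      - Complex.I * (Real.sin (kpath μ ε * (2 + ε)) : ℂ)) / ((ε : ℂ))^2))
    (𝓝[≠] 0)
    (𝓝 (((-(π ^ 2 / 16) : ℝ) : ℂ) - Complex.I * ((π / 4 - 2 * μ : ℝ) : ℂ))) := by
  have hA := (tendsto_A μ)
  have hB := (tendsto_B μ)
  have hAc : Tendsto (fun ε : ℝ =>
      ((Real.cos (kpath μ ε) * Real.cos (kpath μ ε * (1 + ε)) / ε ^ 2 : ℝ) : ℂ))
      (𝓝[≠] 0) (𝓝 ((-(π ^ 2 / 16) : ℝ) : ℂ)) :=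
    (Complex.continuous_ofReal.tendsto _).comp hA
  have hBc : Tendsto (fun ε : ℝ =>
      ((Real.sin (kpath μ ε * (2 + ε)) / ε ^ 2 : ℝ) : ℂ))
      (𝓝[≠] 0) (𝓝 ((π / 4 - 2 * μ : ℝ) : ℂ)) :=
    (Complex.continuous_ofReal.tendsto _).comp hB
  have h := hAc.sub ((tendsto_const_nhds (x := Complex.I)).mul hBc)
  refine h.congr fun ε => ?_
  push_cast
  ring

lemma den_lim_ne (μ : ℝ) :
    (((-(π ^ 2 / 16) : ℝ) : ℂ) - Complex.I * ((π / 4 - 2 * μ : ℝ) : ℂ)) ≠ 0 := by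
  intro h
  have hre : π = 0 := by
    have := congrArg Complex.re h
    simpa [Complex.sub_re, Complex.mul_re, Complex.I_re, Complex.I_im,
      Complex.ofReal_re, Complex.ofReal_im, ← Complex.ofReal_pow] using this
  exact Real.pi_ne_zero hre

/-- The scaled complex numerator limit. -/
lemma tendsto_num (μ : ℝ) : Tendsto (fun ε : ℝ =>
    (((Real.cos (kpath μ ε) : ℂ) * (Real.cos (kpath μ ε * (1 + ε)) : ℂ)
      + Complex.I * (Real.sin (kpath μ ε * (2 + ε)) : ℂ)) / ((ε : ℂ))^2))
    (𝓝[≠] 0)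
    (𝓝 (((-(π ^ 2 / 16) : ℝ) : ℂ) + Complex.I * ((π / 4 - 2 * μ : ℝ) : ℂ))) := by
  have hAc : Tendsto (fun ε : ℝ =>
      ((Real.cos (kpath μ ε) * Real.cos (kpath μ ε * (1 + ε)) / ε ^ 2 : ℝ) : ℂ))
      (𝓝[≠] 0) (𝓝 ((-(π ^ 2 / 16) : ℝ) : ℂ)) :=
    (Complex.continuous_ofReal.tendsto _).comp (tendsto_A μ)
  have hBc : Tendsto (fun ε : ℝ =>
      ((Real.sin (kpath μ ε * (2 + ε)) / ε ^ 2 : ℝ) : ℂ))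
      (𝓝[≠] 0) (𝓝 ((π / 4 - 2 * μ : ℝ) : ℂ)) :=
    (Complex.continuous_ofReal.tendsto _).comp (tendsto_B μ)
  have h := hAc.add ((tendsto_const_nhds (x := Complex.I)).mul hBc)
  refine h.congr fun ε => ?_
  push_cast
  ring

lemma limit_eq_fanoG (μ : ℝ) :
    (((-(π ^ 2 / 16) : ℝ) : ℂ) + Complex.I * ((π / 4 - 2 * μ : ℝ) : ℂ)) /
    (((-(π ^ 2 / 16) : ℝ) : ℂ) - Complex.I * ((π / 4 - 2 * μ : ℝ) : ℂ)) = fanoG μ := by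
  have h1 := den_lim_ne μ
  have h2 : ((π ^ 2 : ℂ) - Complex.I * (32 * (μ : ℂ) - 4 * (π : ℂ))) ≠ 0 := by
    intro h
    have hre : π = 0 := by
      have := congrArg Complex.re h
      simpa [Complex.sub_re, Complex.mul_re, Complex.I_re, Complex.I_im, Complex.add_re,
        Complex.ofReal_re, Complex.ofReal_im, Complex.mul_im, ← Complex.ofReal_pow] using this
    exact Real.pi_ne_zero hre
  rw [fanoG, div_eq_div_iff h1 h2]
  push_cast
  ring

lemma part1 (μ : ℝ) : Tendsto (fun ε : ℝ => scatR ε (π / 2 - ε * π / 4 + ε ^ 2 * μ))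
    (𝓝[≠] (0:ℝ)) (𝓝 (fanoG μ)) := by
  have h := (tendsto_num μ).div (tendsto_den μ) (den_lim_ne μ)
  rw [limit_eq_fanoG μ] at h
  refine h.congr' ?_
  filter_upwards [self_mem_nhdsWithin] with ε (hε : ε ≠ 0)
  have hε2 : ((ε : ℂ)) ^ 2 ≠ 0 := pow_ne_zero _ (Complex.ofReal_ne_zero.mpr hε)
  simp only [Pi.div_apply, scatR, kpath]
  rw [div_div_div_cancel_right₀ _ _]
  exact hε2

set_option maxHeartbeats 1000000 in
/-- Along the parabolic paths k = π/2 − επ/4 + ε²μ, the limit of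
𝓡(ε, k) as ε → 0, ε ≠ 0, equals g(μ). In particular 𝓡 admits different
limits at (0, π/2) along different paths, so it has no continuous extension
at (0, π/2) (relative to the set where its denominator does not vanish). -/
theorem fano_parabolic_path :
    (∀ μ : ℝ, Tendsto (fun ε : ℝ => scatR ε (π / 2 - ε * π / 4 + ε ^ 2 * μ))
        (𝓝[≠] (0:ℝ)) (𝓝 (fanoG μ))) ∧
    ¬ ∃ c : ℂ, Tendsto (fun p : ℝ × ℝ => scatR p.1 p.2)
        (𝓝[{p : ℝ × ℝ |
          ((Real.cos p.2 : ℂ) * (Real.cos (p.2 * (1 + p.1)) : ℂ)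
            - Complex.I * (Real.sin (p.2 * (2 + p.1)) : ℂ)) ≠ 0}] (0, π / 2))
        (𝓝 c) := by
  constructor
  · exact part1
  · rintro ⟨c, hc⟩
    set S : Set (ℝ × ℝ) := {p : ℝ × ℝ |
          ((Real.cos p.2 : ℂ) * (Real.cos (p.2 * (1 + p.1)) : ℂ)
            - Complex.I * (Real.sin (p.2 * (2 + p.1)) : ℂ)) ≠ 0} with hS
    have key : ∀ μ : ℝ, c = fanoG μ := by
      intro μ
      -- the path eventually lies in S
      have hden := tendsto_den μ
      have hne : ∀ᶠ ε in 𝓝[≠] (0:ℝ),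
          (((Real.cos (kpath μ ε) : ℂ) * (Real.cos (kpath μ ε * (1 + ε)) : ℂ)
            - Complex.I * (Real.sin (kpath μ ε * (2 + ε)) : ℂ)) / ((ε : ℂ))^2) ≠ 0 :=
        hden.eventually_ne (den_lim_ne μ)
      have hmem : ∀ᶠ ε in 𝓝[≠] (0:ℝ), ((ε, kpath μ ε) : ℝ × ℝ) ∈ S := by
        filter_upwards [hne] with ε h
        simp only [hS, Set.mem_setOf_eq]
        intro h0
        exact h (by rw [h0, zero_div])
      have hpath : Tendsto (fun ε : ℝ => ((ε, kpath μ ε) : ℝ × ℝ)) (𝓝[≠] (0:ℝ))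
          (𝓝[S] (0, π / 2)) := by
        apply tendsto_nhdsWithin_iff.mpr
        constructor
        · have hcont : ContinuousAt (fun ε : ℝ => ((ε, kpath μ ε) : ℝ × ℝ)) 0 := by
            unfold kpath; fun_prop
          have h2 : Tendsto (fun ε : ℝ => ((ε, kpath μ ε) : ℝ × ℝ)) (𝓝[≠] (0:ℝ))
              (𝓝 (0, kpath μ 0)) := hcont.continuousWithinAt
          rw [show kpath μ 0 = π / 2 by simp [kpath]] at h2
          exact h2
        · exact hmem
      have h1 : Tendsto (fun ε : ℝ => scatR ε (kpath μ ε)) (𝓝[≠] (0:ℝ)) (𝓝 c) := by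
        have h := hc.comp hpath
        exact h.congr fun ε => rfl
      have h2 : Tendsto (fun ε : ℝ => scatR ε (kpath μ ε)) (𝓝[≠] (0:ℝ)) (𝓝 (fanoG μ)) :=
        part1 μ
      exact tendsto_nhds_unique h1 h2
    have e1 := key 0
    have e2 := key (π / 8)
    rw [e1] at e2
    have hpi2 : ((π : ℂ) ^ 2) ≠ 0 := by
      simpa using (Complex.ofReal_ne_zero.mpr Real.pi_ne_zero)
    have hg2 : fanoG (π / 8) = 1 := by
      unfold fanoG
      push_cast
      rw [show (32 : ℂ) * (π / 8) - 4 * π = 0 by ring]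
      simp [hpi2]
    rw [hg2] at e2
    unfold fanoG at e2
    have hden0 : ((π ^ 2 : ℂ) - Complex.I * (32 * ((0:ℝ) : ℂ) - 4 * (π : ℂ))) ≠ 0 := by
      intro h
      have hre : π = 0 := by
        have := congrArg Complex.re h
        simpa [Complex.sub_re, Complex.mul_re, Complex.I_re, Complex.I_im, Complex.add_re,
          Complex.ofReal_re, Complex.ofReal_im, Complex.mul_im, ← Complex.ofReal_pow] using this
      exact Real.pi_ne_zero hre
    rw [div_eq_one_iff_eq hden0] at e2
    have : Complex.I * (32 * ((0:ℝ) : ℂ) - 4 * (π : ℂ)) = 0 := by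
      linear_combination e2 / 2
    simp [Complex.I_ne_zero, Complex.ofReal_ne_zero] at this
end

section
/- Let R₊, R₋, T, a, b ∈ ℂ with T ≠ 0. Assume the symmetric matrix S = [[R₊, T], [T, R₋]] is unitary, i.e. |R₊|² + |T|² = 1, |R₋|² + |T|² = 1 and R₊·conj(T) + T·conj(R₋) = 0. Assume further that R₊·conj(a) + T·conj(b) = a and T·conj(a) + R₋·conj(b) = b. Then (|a|² + |b|²)/2 = Re(a·b/T). -/
/-- Key identity in the proof that the asymptotic transmission coefficient
vanishes: if the symmetric matrix [[R₊,T],[T,R₋]] is unitary, T ≠ 0, and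
R₊·conj(a) + T·conj(b) = a and T·conj(a) + R₋·conj(b) = b, then
(|a|² + |b|²)/2 = Re(ab/T). -/
theorem unitary_scattering_key_identity (Rp Rm T a b : ℂ) (hT : T ≠ 0)
    (h1 : ‖Rp‖ ^ 2 + ‖T‖ ^ 2 = 1)
    (h2 : ‖Rm‖ ^ 2 + ‖T‖ ^ 2 = 1)
    (h3 : Rp * (starRingEnd ℂ) T + T * (starRingEnd ℂ) Rm = 0)
    (h4 : Rp * (starRingEnd ℂ) a + T * (starRingEnd ℂ) b = a)
    (h5 : T * (starRingEnd ℂ) a + Rm * (starRingEnd ℂ) b = b) :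
    (‖a‖ ^ 2 + ‖b‖ ^ 2) / 2 = (a * b / T).re := by
  set c := starRingEnd ℂ with hc
  have h3' : c Rp * T + c T * Rm = 0 := by
    have := congrArg c h3
    simpa [map_add, map_mul] using this
  have h4' : c Rp * a + c T * b = c a := by
    have := congrArg c h4
    simpa [map_add, map_mul] using this
  have key : a * b * c T + c a * c b * T = (T * c T) * (a * c a + b * c b) := by
    linear_combination (a * c b) * h3' - (c T * a) * h5 - (c b * T) * h4'
  have hre := congrArg Complex.re key
  have hTns : Complex.normSq T ≠ 0 := by
    simpa [Complex.normSq_eq_zero] using hT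
  rw [Complex.sq_norm, Complex.sq_norm, Complex.div_re]
  simp only [hc, Complex.mul_re, Complex.mul_im, Complex.add_re, Complex.add_im,
    Complex.conj_re, Complex.conj_im, Complex.normSq_apply] at hre ⊢
  have hTns' : T.re * T.re + T.im * T.im ≠ 0 := by
    simpa [Complex.normSq_apply] using hTns
  have hTns'' : T.re ^ 2 + T.im ^ 2 ≠ 0 := by simpa [sq] using hTns'
  field_simp
  ring_nf at hre ⊢
  linarith [hre]
end

section
/- Let R₊, R₋, T, a, b ∈ ℂ with T ≠ 0 and (a,b) ≠ (0,0). Assume the symmetric matrix S = [[R₊, T], [T, R₋]] is unitary, i.e. |R₊|² + |T|² = 1, |R₋|² + |T|² = 1 and R₊·conj(T) + T·conj(R₋) = 0, and that R₊·conj(a) + T·conj(b) = a and T·conj(a) + R₋·conj(b) = b. Then a ≠ 0 and b ≠ 0, and there exists μ ∈ ℝ such that T + a·b/(i·μ − (|a|² + |b|²)/2) = 0. -/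
/-- If the symmetric matrix [[R₊,T],[T,R₋]] is unitary, T ≠ 0, (a,b) ≠ (0,0)
and R₊·conj(a) + T·conj(b) = a, T·conj(a) + R₋·conj(b) = b, then a ≠ 0, b ≠ 0,
and the asymptotic transmission coefficient μ ↦ T + ab/(iμ − (|a|²+|b|²)/2)
vanishes for some real μ. -/
theorem asymptotic_transmission_vanishes (Rp Rm T a b : ℂ) (hT : T ≠ 0)
    (hab : ¬(a = 0 ∧ b = 0))
    (h1 : ‖Rp‖ ^ 2 + ‖T‖ ^ 2 = 1)
    (h2 : ‖Rm‖ ^ 2 + ‖T‖ ^ 2 = 1)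
    (h3 : Rp * (starRingEnd ℂ) T + T * (starRingEnd ℂ) Rm = 0)
    (h4 : Rp * (starRingEnd ℂ) a + T * (starRingEnd ℂ) b = a)
    (h5 : T * (starRingEnd ℂ) a + Rm * (starRingEnd ℂ) b = b) :
    a ≠ 0 ∧ b ≠ 0 ∧
    ∃ μ : ℝ, T + a * b /
      (Complex.I * (μ : ℂ) -
        ((‖a‖ ^ 2 + ‖b‖ ^ 2 : ℝ) : ℂ) / 2) = 0 := by
  set c := (starRingEnd ℂ) with hc
  -- a ≠ 0 and b ≠ 0
  have ha : a ≠ 0 := by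
    rintro rfl
    have hb : b ≠ 0 := fun h => hab ⟨rfl, h⟩
    apply hb
    have : T * c b = 0 := by simpa using h4
    have : c b = 0 := by
      rcases mul_eq_zero.mp this with h | h
      · exact absurd h hT
      · exact h
    simpa using congrArg c this
  have hb : b ≠ 0 := by
    rintro rfl
    apply ha
    have : T * c a = 0 := by simpa using h5
    have : c a = 0 := by
      rcases mul_eq_zero.mp this with h | h
      · exact absurd h hT
      · exact h
    simpa using congrArg c this
  refine ⟨ha, hb, ?_⟩
  have hcT : c T ≠ 0 := by simpa using hT
  -- unitarity in product form
  have e1 : Rp * c Rp + T * c T = 1 := by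
    rw [Complex.mul_conj, Complex.mul_conj]
    rw [Complex.sq_norm, Complex.sq_norm] at h1
    exact_mod_cast h1
  have e2 : Rm * c Rm + T * c T = 1 := by
    rw [Complex.mul_conj, Complex.mul_conj]
    rw [Complex.sq_norm, Complex.sq_norm] at h2
    exact_mod_cast h2
  -- conjugated hypotheses
  have c4 : c Rp * a + c T * b = c a := by
    have := congrArg c h4
    simpa [map_add, map_mul] using this
  have c5 : c T * a + c Rm * b = c b := by
    have := congrArg c h5
    simpa [map_add, map_mul] using this
  -- key steps
  have stepA : a * b * (T * c T) = Rp * c T * b ^ 2 + T * b * c b := by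
    linear_combination a * b * e1 - b * h4 - Rp * b * c4
  have stepB : c a * c b * (T * c T) = c Rm * T * (c a) ^ 2 + c T * a * c a := by
    linear_combination c a * c b * e2 - c a * c5 - c Rm * c a * h5
  have stepS : c Rp * a ^ 2 + c Rm * b ^ 2 + 2 * c T * a * b = a * c a + b * c b := by
    linear_combination a * c4 + b * c5
  have stepQ : T * (c a) ^ 2 - c T * b ^ 2 = c Rp * T * (a * c a + b * c b) := by
    linear_combination (-T * (c Rp * a + c T * b + c a)) * c4 + c T * b ^ 2 * e1
      - c Rp * b ^ 2 * h3 + c Rp * T * stepS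
  have G' : (T * c T) * (a * b * c T + c a * c b * T)
      = (T * c T) * ((T * c T) * (a * c a + b * c b)) := by
    linear_combination c T * stepA + T * stepB + T * (c a) ^ 2 * h3
      - Rp * c T * stepQ - T * c T * (a * c a + b * c b) * e1
  have hTcT : T * c T ≠ 0 := mul_ne_zero hT hcT
  have G : a * b * c T + c a * c b * T = (T * c T) * (a * c a + b * c b) :=
    mul_left_cancel₀ hTcT G'
  -- relate to w = a*b/T
  set w : ℂ := a * b / T with hw
  have hs : ((‖a‖ ^ 2 + ‖b‖ ^ 2 : ℝ) : ℂ) = a * c a + b * c b := by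
    rw [Complex.mul_conj, Complex.mul_conj, ← Complex.ofReal_add, Complex.sq_norm,
      Complex.sq_norm]
  have hwc : w + c w = a * c a + b * c b := by
    rw [hw, map_div₀, map_mul]
    field_simp
    linear_combination G
  have hre : 2 * w.re = ‖a‖ ^ 2 + ‖b‖ ^ 2 := by
    have h' := (Complex.add_conj w).symm.trans (hwc.trans hs.symm)
    exact_mod_cast h'
  refine ⟨-w.im, ?_⟩
  have hreC : ((‖a‖ ^ 2 + ‖b‖ ^ 2 : ℝ) : ℂ) = ((2 * w.re : ℝ) : ℂ) :=
    (congrArg Complex.ofReal hre).symm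
  have hden : Complex.I * ((-w.im : ℝ) : ℂ) -
      ((‖a‖ ^ 2 + ‖b‖ ^ 2 : ℝ) : ℂ) / 2 = -w := by
    rw [hreC]
    calc Complex.I * ((-w.im : ℝ) : ℂ) - ((2 * w.re : ℝ) : ℂ) / 2
        = -((w.re : ℂ) + (w.im : ℂ) * Complex.I) := by push_cast; ring
      _ = -w := by rw [Complex.re_add_im]
  rw [hden, hw]
  have hab' : a * b ≠ 0 := mul_ne_zero ha hb
  field_simp
  ring
end
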